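/- arXiv:1803.03530 — 3 statements merged into one kernel-verified Lean document; each statement's English description precedes it below -/
import Mathlib

section
/- There exists an absolute constant C > 0 such that for every ε ∈ (0,1) and every n ∈ ℕ there exists an ε-synchronization string of length n over an alphabet Σ of size at most C·ε⁻². -/
/-!
If a string of length `n` is not an `ε`-synchronization string, two adjacent substrings of
total length `l` share a common subsequence of length `m ≥ εl/2`; its two occurrences occupy a
set `Z` of `2m` positions of span less than `2m/ε` on which the string reads as a square `ww`.
For a uniformly random string over `q` letters this happens with probability `q ^ (-m)`, and
at most `(9/ε) ^ (2m)` such sets of size `2m` contain a given position. Giving the event on `Z`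
the weight `(2/q) ^ m`, the asymmetric Lovász local lemma, in its counting form for uniformly
random strings, produces a string avoiding all of them as soon as `q ≥ 810/ε²`.
-/

/-- The length of a longest common subsequence of two strings (lists). -/
noncomputable def lcsLen {α : Type*} (S T : List α) : ℕ :=
  sSup {n | ∃ U : List α, U.length = n ∧ U.Sublist S ∧ U.Sublist T}

/-- The edit distance (insertions/deletions) between two strings, via
`ED(S,T) = |S| + |T| - 2·LCS(S,T)`. -/
noncomputable def editDistance {α : Type*} (S T : List α) : ℕ :=
  S.length + T.length - 2 * lcsLen S T

/-- `strSlice S a b` is the substring `S[a, b)` of `S` (1-indexed, `b` excluded). -/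
def strSlice {α : Type*} (S : List α) (a b : ℕ) : List α :=
  (S.drop (a - 1)).take (b - a)

/-- `islice f a b` is the substring `f[a, b)` of the infinite string `f`
(1-indexed, `b` excluded). -/
def islice {α : Type*} (f : ℕ → α) (a b : ℕ) : List α :=
  (List.range (b - a)).map fun t => f (a + t)

/-- `S` is an ε-synchronization string: for all `1 ≤ i < j < k ≤ |S| + 1`,
`ED(S[i,j), S[j,k)) > (1-ε)(k-i)`. -/
def IsSyncString {α : Type*} (ε : ℝ) (S : List α) : Prop :=
  ∀ i j k : ℕ, 1 ≤ i → i < j → j < k → k ≤ S.length + 1 →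
    (1 - ε) * ((k : ℝ) - (i : ℝ)) < (editDistance (strSlice S i j) (strSlice S j k) : ℝ)

/-- `S` is an ε-synchronization circle: every cyclic rotation of `S` is an
ε-synchronization string. -/
def IsSyncCircle {α : Type*} (ε : ℝ) (S : List α) : Prop :=
  ∀ i : ℕ, 1 ≤ i → i ≤ S.length → IsSyncString ε (S.rotate (i - 1))

/-- An infinite ε-synchronization string (1-indexed). -/
def IsInfSyncString {α : Type*} (ε : ℝ) (f : ℕ → α) : Prop :=
  ∀ i j k : ℕ, 1 ≤ i → i < j → j < k →
    (1 - ε) * ((k : ℝ) - (i : ℝ)) < (editDistance (islice f i j) (islice f j k) : ℝ)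

/-- `S` is a `c`-long-distance ε-synchronization string: for all
`1 ≤ i < j ≤ i' < j' ≤ |S| + 1` with `l = (j-i)+(j'-i')`, if the two intervals
are adjacent (`i' = j`) or `l > c · log |S|`, then
`ED(S[i,j), S[i',j')) > (1-ε)·l`. -/
noncomputable def IsLongDistSyncString {α : Type*} (c ε : ℝ) (S : List α) : Prop :=
  ∀ i j i' j' : ℕ, 1 ≤ i → i < j → j ≤ i' → i' < j' → j' ≤ S.length + 1 →
    (i' = j ∨ c * Real.log (S.length : ℝ) < ((j : ℝ) - i) + ((j' : ℝ) - i')) →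
    (1 - ε) * (((j : ℝ) - i) + ((j' : ℝ) - i')) <
      (editDistance (strSlice S i j) (strSlice S i' j') : ℝ)

/-- An infinite weak ε-synchronization string: for all `1 ≤ i < j < k`,
`ED(S[i,j), S[j,k)) ≥ ⌊(1-ε)(k-i)⌋`. -/
def IsInfWeakSyncString {α : Type*} (ε : ℝ) (f : ℕ → α) : Prop :=
  ∀ i j k : ℕ, 1 ≤ i → i < j → j < k →
    ((⌊(1 - ε) * ((k : ℝ) - (i : ℝ))⌋ : ℤ) : ℝ) ≤
      (editDistance (islice f i j) (islice f j k) : ℝ)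

open Finset

section LovaszLocalLemma

variable {ι β I : Type*} [Fintype ι] [DecidableEq ι] [Fintype β] [DecidableEq β]
  [DecidableEq I]

theorem card_inter_mul_card_univ_of_disjoint {A B : Finset (ι → β)} {T T' : Finset ι}
    (hA : DependsOn (· ∈ A) (T : Set ι)) (hB : DependsOn (· ∈ B) (T' : Set ι))
    (hTT' : Disjoint T T') :
    #(A ∩ B) * Fintype.card (ι → β) = #A * #B := by
  -- `(A ∩ B) × univ ≃ A × B` by exchanging the `T`-coordinates of the two functions
  let swap : (ι → β) × (ι → β) → (ι → β) × (ι → β) :=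
    fun p => (T.piecewise p.1 p.2, T.piecewise p.2 p.1)
  have swap_swap : ∀ p, swap (swap p) = p := by
    rintro ⟨f, g⟩
    ext v <;> by_cases hv : v ∈ T <;> simp [swap, hv]
  have agree_T : ∀ f g : ι → β, ∀ v ∈ (T : Set ι), f v = T.piecewise f g v :=
    fun f g v hv => (T.piecewise_eq_of_mem f g hv).symm
  have agree_T' : ∀ f g : ι → β, ∀ v ∈ (T' : Set ι), f v = T.piecewise g f v :=
    fun f g v hv => (T.piecewise_eq_of_notMem g f (disjoint_right.mp hTT' hv)).symm
  rw [← card_univ, ← card_product, ← card_product]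
  refine card_nbij' swap swap ?_ ?_ (fun p _ => swap_swap p) (fun p _ => swap_swap p)
  · rintro ⟨f, g⟩ hp
    simp only [coe_product, Set.mem_prod, mem_coe, mem_inter] at hp ⊢
    exact ⟨(hA (agree_T f g)).mp hp.1.1, (hB (agree_T' f g)).mp hp.1.2⟩
  · rintro ⟨f, g⟩ hp
    simp only [coe_product, Set.mem_prod, mem_coe, mem_inter, mem_univ, and_true] at hp ⊢
    exact ⟨(hA (agree_T f g)).mp hp.1, (hB (agree_T' g f)).mp hp.2⟩

variable {A : I → Finset (ι → β)} {V : I → Finset ι} {x : I → ℝ}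

omit [DecidableEq I] in
theorem dependsOn_mem_compl_biUnion (hdep : ∀ i, DependsOn (· ∈ A i) (V i : Set ι))
    (S : Finset I) : DependsOn (· ∈ (S.biUnion A)ᶜ) (S.biUnion V : Set ι) := by
  intro f g hfg
  have hA : ∀ j ∈ S, (f ∈ A j) = (g ∈ A j) := fun j hj =>
    hdep j fun v hv => hfg v (mem_biUnion.mpr ⟨j, hj, hv⟩)
  simp only [mem_compl, mem_biUnion, not_exists, not_and]
  exact propext (forall₂_congr fun j hj => by rw [hA j hj])

theorem card_compl_biUnion_insert_add (S : Finset I) (j : I) :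
    #((insert j S).biUnion A)ᶜ + #(A j ∩ (S.biUnion A)ᶜ) = #(S.biUnion A)ᶜ := by
  rw [biUnion_insert, compl_union, inter_comm (A j), inter_comm, ← sdiff_eq_inter_compl,
    card_sdiff_add_card_inter]

/-- Adding the events of `T` one at a time, each removes at most an `x j`-fraction of the
functions avoiding the events added before it. -/
theorem prod_mul_card_compl_biUnion_le (R T : Finset I) (hx : ∀ j ∈ T, x j ≤ 1)
    (hstep : ∀ j ∈ T, ∀ U ⊆ T, j ∉ U →
      (#(A j ∩ ((R ∪ U).biUnion A)ᶜ) : ℝ) ≤ x j * #((R ∪ U).biUnion A)ᶜ) :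
    (∏ j ∈ T, (1 - x j)) * #(R.biUnion A)ᶜ ≤ #((R ∪ T).biUnion A)ᶜ := by
  induction T using Finset.induction_on with
  | empty => simp
  | @insert j T hjT ih =>
    have hcard := card_compl_biUnion_insert_add (A := A) (R ∪ T) j
    rw [← Nat.cast_inj (R := ℝ), Nat.cast_add] at hcard
    have hj := hstep j (mem_insert_self j T) T (subset_insert j T) hjT
    have hT := ih (fun i hi => hx i (mem_insert_of_mem hi))
      fun i hi U hU hiU => hstep i (mem_insert_of_mem hi) U (hU.trans (subset_insert j T)) hiU
    rw [prod_insert hjT, union_insert, mul_assoc]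
    nlinarith [hx j (mem_insert_self j T)]

/-- The hypothesis of the asymmetric Lovász local lemma for the uniform distribution on
`ι → β`, when each event `A i` only depends on the coordinates in `V i`. -/
def LocalLemmaBound (idx : Finset I) (A : I → Finset (ι → β)) (V : I → Finset ι) (x : I → ℝ) :
    Prop :=
  ∀ i ∈ idx, (#(A i) : ℝ) ≤
    x i * (∏ j ∈ idx with j ≠ i ∧ ¬Disjoint (V i) (V j), (1 - x j)) * Fintype.card (ι → β)

variable {idx : Finset I}

/-- In probabilistic terms: `P(A i | no event of S) ≤ x i`. -/
theorem card_inter_compl_biUnion_le [Nonempty β] (hx0 : ∀ i ∈ idx, 0 ≤ x i)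
    (hx1 : ∀ i ∈ idx, x i < 1) (hdep : ∀ i, DependsOn (· ∈ A i) (V i : Set ι))
    (hA : LocalLemmaBound idx A V x) {S : Finset I} (hS : S ⊆ idx) {i : I} (hi : i ∈ idx)
    (hiS : i ∉ S) : (#(A i ∩ (S.biUnion A)ᶜ) : ℝ) ≤ x i * #(S.biUnion A)ᶜ := by
  induction hn : #S using Nat.strong_induction_on generalizing S i with
  | _ n ih =>
  -- `A i` is independent of the events of `S₂`; those of `S₁` are peeled off using `ih`
  set S₁ := {j ∈ S | ¬Disjoint (V i) (V j)}
  set S₂ := {j ∈ S | Disjoint (V i) (V j)}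
  have hS₂₁ : S₂ ∪ S₁ = S := filter_union_filter_not_eq _ S
  have hindep : (#(A i ∩ (S₂.biUnion A)ᶜ) : ℝ) * Fintype.card (ι → β) =
      #(A i) * #(S₂.biUnion A)ᶜ := by
    exact_mod_cast card_inter_mul_card_univ_of_disjoint (hdep i)
      (dependsOn_mem_compl_biUnion hdep S₂)
      ((disjoint_biUnion_right _ _ _).mpr fun j hj => (mem_filter.mp hj).2)
  have hprod :
      ∏ j ∈ idx with j ≠ i ∧ ¬Disjoint (V i) (V j), (1 - x j) ≤ ∏ j ∈ S₁, (1 - x j) :=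
    prod_le_prod_of_subset_of_le_one
      (fun j hj => by
        obtain ⟨hjS, hj⟩ := mem_filter.mp hj
        exact mem_filter.mpr ⟨hS hjS, fun h => hiS (h ▸ hjS), hj⟩)
      (fun j hj => by linarith [hx1 j (mem_filter.mp hj).1])
      (fun j hj _ => by linarith [hx0 j (mem_filter.mp hj).1])
  have hpeel : (∏ j ∈ S₁, (1 - x j)) * #(S₂.biUnion A)ᶜ ≤ #((S₂ ∪ S₁).biUnion A)ᶜ := by
    refine prod_mul_card_compl_biUnion_le S₂ S₁
      (fun j hj => (hx1 j (hS (mem_filter.mp hj).1)).le) fun j hj U hU hjU => ?_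
    have hjS : j ∈ S := (mem_filter.mp hj).1
    have hjS₂ : j ∉ S₂ := fun h => (mem_filter.mp hj).2 (mem_filter.mp h).2
    have hsub : S₂ ∪ U ⊆ S.erase j := fun a ha => mem_erase.mpr
      ⟨by rintro rfl; rcases mem_union.mp ha with h | h <;> contradiction,
        hS₂₁ ▸ union_subset_union_right hU ha⟩
    exact ih _ (hn ▸ (card_le_card hsub).trans_lt (card_erase_lt_of_mem hjS))
      ((hsub.trans (erase_subset j S)).trans hS) (hS hjS) (by simpa using ⟨hjS₂, hjU⟩) rfl
  have hQ : (0 : ℝ) < Fintype.card (ι → β) := by exact_mod_cast Fintype.card_pos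
  calc (#(A i ∩ (S.biUnion A)ᶜ) : ℝ)
      ≤ #(A i ∩ (S₂.biUnion A)ᶜ) := by
        gcongr
        exact filter_subset _ S
    _ ≤ x i * (∏ j ∈ S₁, (1 - x j)) * #(S₂.biUnion A)ᶜ := by
        rw [← mul_le_mul_iff_of_pos_right hQ, hindep]
        calc (#(A i) : ℝ) * #(S₂.biUnion A)ᶜ
            ≤ x i * (∏ j ∈ idx with j ≠ i ∧ ¬Disjoint (V i) (V j), (1 - x j)) *
                Fintype.card (ι → β) * #(S₂.biUnion A)ᶜ := by gcongr; exact hA i hi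
          _ ≤ x i * (∏ j ∈ S₁, (1 - x j)) * Fintype.card (ι → β) * #(S₂.biUnion A)ᶜ := by
              gcongr; exact hx0 i hi
          _ = _ := by ring
    _ ≤ x i * #(S.biUnion A)ᶜ := by
        rw [mul_assoc, ← hS₂₁]
        exact mul_le_mul_of_nonneg_left hpeel (hx0 i hi)

theorem exists_forall_notMem_of_localLemmaBound [Nonempty β] (hx0 : ∀ i ∈ idx, 0 ≤ x i)
    (hx1 : ∀ i ∈ idx, x i < 1) (hdep : ∀ i, DependsOn (· ∈ A i) (V i : Set ι))
    (hA : LocalLemmaBound idx A V x) : ∃ f : ι → β, ∀ i ∈ idx, f ∉ A i := by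
  have hbound := prod_mul_card_compl_biUnion_le ∅ idx (fun j hj => (hx1 j hj).le)
    fun j hj U hU hjU => card_inter_compl_biUnion_le hx0 hx1 hdep hA
      (by simpa using hU) hj (by simpa using hjU)
  have hpos : (0 : ℝ) < (∏ j ∈ idx, (1 - x j)) * #((∅ : Finset I).biUnion A)ᶜ := by
    refine mul_pos (prod_pos fun j hj => by linarith [hx1 j hj]) ?_
    simp only [biUnion_empty, compl_empty, card_univ]
    exact_mod_cast Fintype.card_pos
  have hcard : (0 : ℝ) < #(idx.biUnion A)ᶜ := hpos.trans_le (by simpa using hbound)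
  obtain ⟨f, hf⟩ := card_pos.mp (by exact_mod_cast hcard)
  exact ⟨f, fun i hi hfi => (mem_compl.mp hf) (mem_biUnion.mpr ⟨i, hi, hfi⟩)⟩

end LovaszLocalLemma

section UnitIntervalProducts

variable {I J : Type*} {g : I → ℝ}

theorem one_sub_sum_le_prod_one_sub (s : Finset I) (hg0 : ∀ i ∈ s, 0 ≤ g i)
    (hg1 : ∀ i ∈ s, g i ≤ 1) : 1 - ∑ i ∈ s, g i ≤ ∏ i ∈ s, (1 - g i) := by
  classical
  induction s using Finset.induction_on with
  | empty => simp
  | @insert j s hjs ih =>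
    rw [sum_insert hjs, prod_insert hjs]
    have hs := ih (fun i hi => hg0 i (mem_insert_of_mem hi))
      fun i hi => hg1 i (mem_insert_of_mem hi)
    have hj0 := hg0 j (mem_insert_self j s)
    have hj1 := hg1 j (mem_insert_self j s)
    have := sum_nonneg fun i hi => hg0 i (mem_insert_of_mem hi)
    nlinarith [mul_le_mul_of_nonneg_left hs (sub_nonneg.mpr hj1)]

/-- Overlaps only remove factors, which are at most `1`. -/
theorem prod_prod_le_prod_biUnion [DecidableEq I] (s : Finset J) (t : J → Finset I)
    (hg0 : ∀ i, 0 ≤ g i) (hg1 : ∀ i, g i ≤ 1) :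
    ∏ j ∈ s, ∏ i ∈ t j, g i ≤ ∏ i ∈ s.biUnion t, g i := by
  classical
  induction s using Finset.induction_on with
  | empty => simp
  | @insert j s hjs ih =>
    rw [prod_insert hjs, biUnion_insert, ← union_sdiff_self_eq_union, prod_union disjoint_sdiff]
    gcongr
    · exact prod_nonneg fun i _ => hg0 i
    · exact ih.trans (prod_le_prod_of_subset_of_le_one sdiff_subset (fun i _ => hg0 i)
        fun i _ _ => hg1 i)

end UnitIntervalProducts

theorem Nat.cast_choose_le_exp_one_mul_div_pow (N t : ℕ) :
    (N.choose t : ℝ) ≤ (Real.exp 1 * N / t) ^ t := by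
  rcases Nat.eq_zero_or_pos t with rfl | ht
  · simp
  have ht' : (0 : ℝ) < t := by exact_mod_cast ht
  calc (N.choose t : ℝ) ≤ (N : ℝ) ^ t / t.factorial := Nat.choose_le_pow_div t N
    _ = (N / t : ℝ) ^ t * ((t : ℝ) ^ t / t.factorial) := by
        rw [div_pow]; field_simp
    _ ≤ (N / t : ℝ) ^ t * Real.exp t := by
        gcongr; exact Real.pow_div_factorial_le_exp _ ht'.le t
    _ = (Real.exp 1 * N / t) ^ t := by
        rw [← Real.exp_one_pow, ← mul_pow, mul_div_assoc, mul_comm]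

theorem le_of_div_sq_le {c ε x : ℝ} (hc : 0 ≤ c) (hε0 : 0 < ε) (hε1 : ε < 1)
    (hx : c / ε ^ 2 ≤ x) : c ≤ x :=
  (le_div_self hc (by positivity) (by nlinarith)).trans hx

theorem natCeil_div_sq_le {c ε : ℝ} (hc : 0 ≤ c) (hε0 : 0 < ε) (hε1 : ε < 1) :
    (⌈c / ε ^ 2⌉₊ : ℝ) ≤ (c + 1) / ε ^ 2 := by
  have := Nat.ceil_lt_add_one (show 0 ≤ c / ε ^ 2 by positivity)
  have : (1 : ℝ) ≤ 1 / ε ^ 2 := le_of_div_sq_le zero_le_one hε0 hε1 le_rfl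
  rw [add_div]
  linarith

section EditDistance

variable {α : Type*}

theorem exists_sublist_length_eq_lcsLen (S T : List α) :
    ∃ U : List α, U.length = lcsLen S T ∧ U.Sublist S ∧ U.Sublist T :=
  Nat.sSup_mem (s := {n | ∃ U : List α, U.length = n ∧ U.Sublist S ∧ U.Sublist T})
    ⟨0, [], rfl, List.nil_sublist _, List.nil_sublist _⟩
    ⟨S.length, fun _ ⟨_, hU, hS, _⟩ => hU ▸ hS.length_le⟩

theorem lcsLen_le_length_left (S T : List α) : lcsLen S T ≤ S.length := by
  obtain ⟨U, hU, hS, -⟩ := exists_sublist_length_eq_lcsLen S T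
  exact hU ▸ hS.length_le

theorem lcsLen_le_length_right (S T : List α) : lcsLen S T ≤ T.length := by
  obtain ⟨U, hU, -, hT⟩ := exists_sublist_length_eq_lcsLen S T
  exact hU ▸ hT.length_le

theorem cast_editDistance (S T : List α) :
    (editDistance S T : ℝ) = S.length + T.length - 2 * lcsLen S T := by
  have := lcsLen_le_length_left S T
  have := lcsLen_le_length_right S T
  rw [editDistance, Nat.cast_sub (by omega)]
  push_cast
  ring

theorem length_strSlice {S : List α} {i j : ℕ} (hi : 1 ≤ i) (hij : i ≤ j)
    (hj : j ≤ S.length + 1) : (strSlice S i j).length = j - i := by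
  simp only [strSlice, List.length_take, List.length_drop]
  omega

theorem mul_le_two_mul_lcsLen_of_editDistance_le {S : List α} {ε : ℝ} {i j k : ℕ} (hi : 1 ≤ i)
    (hij : i ≤ j) (hjk : j ≤ k) (hk : k ≤ S.length + 1)
    (h : (editDistance (strSlice S i j) (strSlice S j k) : ℝ) ≤ (1 - ε) * (k - i)) :
    ε * ((k : ℝ) - i) ≤ 2 * lcsLen (strSlice S i j) (strSlice S j k) := by
  rw [cast_editDistance, length_strSlice hi hij (by omega), length_strSlice (by omega) hjk hk,
    Nat.cast_sub hij, Nat.cast_sub hjk] at h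
  linarith

theorem exists_strictMono_of_sublist_strSlice {n : ℕ} (f : Fin n → α) {U : List α} {i j : ℕ}
    (hi : 1 ≤ i) (hU : U.Sublist (strSlice (List.ofFn f) i j)) :
    ∃ φ : Fin U.length → Fin n, StrictMono φ ∧ (∀ t, i ≤ (φ t : ℕ) + 1 ∧ (φ t : ℕ) + 1 < j) ∧
      ∀ t, f (φ t) = U[t] := by
  obtain ⟨e, he⟩ := List.sublist_iff_exists_fin_orderEmbedding_get_eq.mp hU
  have hlt : ∀ t, i - 1 + e t < n ∧ (e t : ℕ) < j - i := fun t => by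
    have := (e t).isLt
    simp only [strSlice, List.length_take, List.length_drop, List.length_ofFn] at this
    omega
  refine ⟨fun t => ⟨i - 1 + e t, (hlt t).1⟩, fun s t hst => ?_, fun t => ?_, fun t => ?_⟩
  · have := e.strictMono hst
    rw [Fin.lt_def] at this ⊢
    simp only
    omega
  · have := hlt t; simp only; omega
  · have h := he t
    simp only [List.get_eq_getElem, strSlice, List.getElem_take, List.getElem_drop,
      List.getElem_ofFn] at h
    exact h.symm

end EditDistance

theorem Fin.strictMono_append {α : Type*} [Preorder α] {m k : ℕ} {φ : Fin m → α}
    {ψ : Fin k → α} (hφ : StrictMono φ) (hψ : StrictMono ψ) (hφψ : ∀ s t, φ s < ψ t) :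
    StrictMono (Fin.append φ ψ) := by
  intro a b hab
  cases a using Fin.addCases <;> cases b using Fin.addCases <;>
    simp only [Fin.append_left, Fin.append_right] <;>
    simp only [Fin.lt_def, Fin.val_castAdd, Fin.val_natAdd] at hab
  · exact hφ (Fin.lt_def.mpr hab)
  · exact hφψ _ _
  · omega
  · exact hψ (Fin.lt_def.mpr (by omega))

section Squares

variable {ι α : Type*}

/-- `f` restricted to `Z`, read in increasing order, is a square word `ww` (vacuous when `#Z`
is odd). -/
def IsSquareOn [LinearOrder ι] (f : ι → α) (Z : Finset ι) : Prop :=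
  ∀ (m : ℕ) (h : #Z = m + m) (t : Fin m),
    f (Z.orderEmbOfFin h (Fin.castAdd m t)) = f (Z.orderEmbOfFin h (Fin.natAdd m t))

theorem dependsOn_isSquareOn [LinearOrder ι] (Z : Finset ι) :
    DependsOn (fun f : ι → α => IsSquareOn f Z) (Z : Set ι) := by
  intro f g hfg
  simp only [IsSquareOn, hfg _ (orderEmbOfFin_mem Z _ _)]

theorem exists_isSquareOn_of_strictMono [LinearOrder ι] {f : ι → α} {m : ℕ} {φ ψ : Fin m → ι}
    (hφ : StrictMono φ) (hψ : StrictMono ψ) (hφψ : ∀ s t, φ s < ψ t)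
    (hf : ∀ t, f (φ t) = f (ψ t)) :
    ∃ Z : Finset ι, #Z = m + m ∧ (∀ u ∈ Z, ∃ t, φ t = u ∨ ψ t = u) ∧ IsSquareOn f Z := by
  have hmono := Fin.strictMono_append hφ hψ hφψ
  have hcard : #(univ.image (Fin.append φ ψ)) = m + m := by
    rw [card_image_of_injective _ hmono.injective, card_univ, Fintype.card_fin]
  refine ⟨_, hcard, fun u hu => ?_, fun m' h t => ?_⟩
  · obtain ⟨a, -, rfl⟩ := mem_image.mp hu
    cases a using Fin.addCases with
    | left s => exact ⟨s, .inl (Fin.append_left φ ψ s).symm⟩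
    | right t => exact ⟨t, .inr (Fin.append_right φ ψ t).symm⟩
  · obtain rfl : m' = m := by omega
    rw [← orderEmbOfFin_unique h (fun _ => mem_image_of_mem _ (mem_univ _)) hmono]
    simpa only [Fin.append_left, Fin.append_right] using hf t

theorem card_filter_forall_apply_eq_le [Fintype ι] [DecidableEq ι] [Fintype α] [DecidableEq α]
    {m : ℕ} (a b : Fin m → ι) (hb : Function.Injective b) (hab : ∀ s t, a s ≠ b t) :
    #{f : ι → α | ∀ t, f (a t) = f (b t)} ≤ Fintype.card α ^ (Fintype.card ι - m) := by
  set R := (univ.image b)ᶜ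
  have hinj : Set.InjOn (fun f : ι → α => fun u : R => f u)
      ↑({f : ι → α | ∀ t, f (a t) = f (b t)} : Finset (ι → α)) := by
    intro f hf g hg hfg
    simp only [coe_filter, mem_univ, true_and, Set.mem_ofPred_eq] at hf hg
    have hR : ∀ u ∈ R, f u = g u := fun u hu => congrFun hfg ⟨u, hu⟩
    funext u
    by_cases hu : u ∈ R
    · exact hR u hu
    · obtain ⟨t, -, rfl⟩ := mem_image.mp (notMem_compl.mp hu)
      rw [← hf t, ← hg t]
      exact hR _ (mem_compl.mpr fun h => by
        obtain ⟨s, -, hs⟩ := mem_image.mp h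
        exact hab t s hs.symm)
  calc #{f : ι → α | ∀ t, f (a t) = f (b t)}
      ≤ Fintype.card (R → α) := card_le_card_of_injOn _ (fun _ _ => mem_univ _) hinj
    _ = Fintype.card α ^ (Fintype.card ι - m) := by
      rw [Fintype.card_fun, Fintype.card_coe, card_compl, card_image_of_injective _ hb,
        card_univ, Fintype.card_fin]

theorem card_filter_isSquareOn_le [LinearOrder ι] [Fintype ι] [Fintype α] [DecidableEq α]
    {Z : Finset ι} [DecidablePred fun f : ι → α => IsSquareOn f Z] {m : ℕ} (hZ : #Z = m + m) :
    #{f : ι → α | IsSquareOn f Z} ≤ Fintype.card α ^ (Fintype.card ι - m) := by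
  set z := Z.orderEmbOfFin hZ
  calc #{f : ι → α | IsSquareOn f Z}
      ≤ #{f : ι → α | ∀ t, f (z (Fin.castAdd m t)) = f (z (Fin.natAdd m t))} :=
        card_le_card fun f hf => by
          simp only [mem_filter, mem_univ, true_and] at hf ⊢
          exact hf m hZ
    _ ≤ Fintype.card α ^ (Fintype.card ι - m) :=
        card_filter_forall_apply_eq_le _ _ (z.injective.comp (Fin.natAdd_injective m m))
          fun s t h => by
            have := congrArg Fin.val (z.injective h)
            simp only [Fin.val_castAdd, Fin.val_natAdd] at this
            omega

end Squares

section SyncStrings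

variable {n q : ℕ} {ε : ℝ}

/-- The possible position sets of a square `ww` witnessing that a string of length `n` is not an
`ε`-synchronization string. -/
noncomputable def denseEvenSets (n : ℕ) (ε : ℝ) : Finset (Finset (Fin n)) :=
  {Z | Z.Nonempty ∧ Even #Z ∧ ∀ a ∈ Z, ∀ b ∈ Z, ε * (((b : ℕ) : ℝ) - (a : ℕ)) < #Z}

theorem two_le_card_of_mem_denseEvenSets {Z : Finset (Fin n)} (hZ : Z ∈ denseEvenSets n ε) :
    2 ≤ #Z := by
  obtain ⟨hne, ⟨k, hk⟩, -⟩ := (mem_filter.mp hZ).2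
  have := card_pos.mpr hne
  omega

theorem exists_isSquareOn_of_not_isSyncString {α : Type*} (hε : 0 < ε) {f : Fin n → α}
    (h : ¬IsSyncString ε (List.ofFn f)) : ∃ Z ∈ denseEvenSets n ε, IsSquareOn f Z := by
  simp only [IsSyncString, not_forall, not_lt, List.length_ofFn] at h
  obtain ⟨i, j, k, hi, hij, hjk, hk, hED⟩ := h
  have hlcs := mul_le_two_mul_lcsLen_of_editDistance_le hi hij.le hjk.le (by simpa using hk) hED
  obtain ⟨U, hU, hUl, hUr⟩ := exists_sublist_length_eq_lcsLen
    (strSlice (List.ofFn f) i j) (strSlice (List.ofFn f) j k)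
  obtain ⟨φ, hφ, hφpos, hφf⟩ := exists_strictMono_of_sublist_strSlice f hi hUl
  obtain ⟨ψ, hψ, hψpos, hψf⟩ := exists_strictMono_of_sublist_strSlice f (by omega) hUr
  -- the first `m` letters of the common subsequence already give a square
  set m := ⌈ε * ((k : ℝ) - i) / 2⌉₊
  have hmU : m ≤ U.length := Nat.ceil_le.mpr (by rw [hU]; linarith)
  have hik : (0 : ℝ) < k - i := sub_pos.mpr (by exact_mod_cast hij.trans hjk)
  have hm : 0 < m := Nat.ceil_pos.mpr (by positivity)
  obtain ⟨Z, hcard, hZ, hsq⟩ := exists_isSquareOn_of_strictMono (f := f)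
    (hφ.comp (Fin.strictMono_castLE hmU)) (hψ.comp (Fin.strictMono_castLE hmU))
    (fun s t => Fin.lt_def.mpr (by
      have := hφpos (Fin.castLE hmU s); have := hψpos (Fin.castLE hmU t)
      simp only [Function.comp]; omega))
    (fun t => by simp only [Function.comp, hφf, hψf])
  have hZpos : ∀ u ∈ Z, i ≤ (u : ℕ) + 1 ∧ (u : ℕ) + 1 < k := fun u hu => by
    obtain ⟨t, rfl | rfl⟩ := hZ u hu
    · have := hφpos (Fin.castLE hmU t); simp only [Function.comp]; omega
    · have := hψpos (Fin.castLE hmU t); simp only [Function.comp]; omega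
  refine ⟨Z, mem_filter.mpr ⟨mem_univ _, card_pos.mp (by omega), ⟨m, hcard⟩,
    fun a ha b hb => ?_⟩, hsq⟩
  have hab : ((b : ℕ) : ℝ) - (a : ℕ) < k - i := by
    have : (b : ℕ) + i < k + a := by have := hZpos a ha; have := hZpos b hb; omega
    have : ((b : ℕ) : ℝ) + i < k + (a : ℕ) := by exact_mod_cast this
    linarith
  calc ε * (((b : ℕ) : ℝ) - (a : ℕ)) < ε * (k - i) := mul_lt_mul_of_pos_left hab hε
    _ ≤ 2 * m := by linarith [Nat.le_ceil (ε * ((k : ℝ) - i) / 2)]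
    _ = #Z := by rw [hcard]; push_cast; ring

theorem card_denseEvenSets_mem_card_eq_le (hε : 0 < ε) (v : Fin n) (m : ℕ) :
    #{Z ∈ denseEvenSets n ε | v ∈ Z ∧ #Z = 2 * m} ≤ (2 * ⌈2 * m / ε⌉₊).choose (2 * m) := by
  set D := ⌈2 * m / ε⌉₊
  -- all of `Z` lies within distance `D` of `v`
  set W := Ico ((v : ℕ) + 1 - D) (v + D)
  have hW : #W ≤ 2 * D := by simp only [W, Nat.card_Ico]; omega
  have hmaps : ∀ Z ∈ ({Z ∈ denseEvenSets n ε | v ∈ Z ∧ #Z = 2 * m} : Finset _),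
      Z.map Fin.valEmbedding ∈ powersetCard (2 * m) W := by
    intro Z hZ
    obtain ⟨⟨-, -, hspan⟩, hvZ, hcard⟩ := by simpa [denseEvenSets] using hZ
    refine mem_powersetCard.mpr ⟨fun u hu => ?_, by rw [card_map, hcard]⟩
    obtain ⟨u, huZ, rfl⟩ := mem_map.mp hu
    have hD : 2 * m / ε ≤ D := Nat.le_ceil _
    have h1 := hspan v hvZ u huZ
    have h2 := hspan u huZ v hvZ
    rw [hcard, Nat.cast_mul, Nat.cast_two, mul_comm, ← lt_div_iff₀ hε] at h1 h2
    have h1' : (u : ℕ) < v + D := by exact_mod_cast (show ((u : ℕ) : ℝ) < v + D by linarith)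
    have h2' : (v : ℕ) < u + D := by exact_mod_cast (show ((v : ℕ) : ℝ) < u + D by linarith)
    simp only [W, mem_Ico, Fin.valEmbedding_apply]
    omega
  calc #{Z ∈ denseEvenSets n ε | v ∈ Z ∧ #Z = 2 * m}
      ≤ #(powersetCard (2 * m) W) :=
        card_le_card_of_injOn _ hmaps fun _ _ _ _ h => map_injective _ h
    _ ≤ (2 * D).choose (2 * m) := by rw [card_powersetCard]; exact Nat.choose_le_choose _ hW

theorem cast_choose_two_mul_ceil_le (hε0 : 0 < ε) (hε1 : ε < 1) {m : ℕ} (hm : 0 < m) :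
    (((2 * ⌈2 * m / ε⌉₊).choose (2 * m) : ℕ) : ℝ) ≤ (9 / ε) ^ (2 * m) := by
  have hm' : (1 : ℝ) ≤ m := by exact_mod_cast hm
  have hD : (⌈2 * m / ε⌉₊ : ℝ) ≤ 3 * m / ε := by
    have := Nat.ceil_lt_add_one (show 0 ≤ 2 * (m : ℝ) / ε by positivity)
    have : (1 : ℝ) ≤ m / ε := by rw [le_div_iff₀ hε0]; linarith
    rw [show 3 * (m : ℝ) / ε = 2 * m / ε + m / ε by ring]
    linarith
  refine (Nat.cast_choose_le_exp_one_mul_div_pow _ _).trans (pow_le_pow_left₀ (by positivity) ?_ _)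
  rw [div_le_div_iff₀ (by positivity) hε0]
  push_cast
  have := Real.exp_one_lt_d9
  have : (⌈2 * m / ε⌉₊ : ℝ) * ε ≤ 3 * m := by rwa [le_div_iff₀ hε0] at hD
  nlinarith [Real.exp_pos 1]

/-- The square event on `Z` has probability `q ^ (-#Z / 2)`; the extra factor `2 ^ (#Z / 2)`
pays for the product over the neighbouring events in the local lemma. -/
noncomputable def squareWeight (q : ℕ) (Z : Finset (Fin n)) : ℝ := (2 / q : ℝ) ^ (#Z / 2)

theorem squareWeight_nonneg (Z : Finset (Fin n)) : 0 ≤ squareWeight q Z := by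
  unfold squareWeight; positivity

theorem squareWeight_le_one (hq : 2 ≤ (q : ℝ)) (Z : Finset (Fin n)) : squareWeight q Z ≤ 1 :=
  pow_le_one₀ (by positivity) (div_le_one_of_le₀ hq (by positivity))

theorem squareWeight_lt_one (hq : 2 < (q : ℝ)) {Z : Finset (Fin n)} (hZ : 2 ≤ #Z) :
    squareWeight q Z < 1 :=
  pow_lt_one₀ (by positivity) ((div_lt_one (by linarith)).mpr hq) (by omega)

theorem sum_squareWeight_le_of_card_div_two_eq (hε0 : 0 < ε) (hε1 : ε < 1) (hq : 0 < (q : ℝ))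
    (v : Fin n) {m : ℕ} (hm : 0 < m) :
    ∑ Z ∈ denseEvenSets n ε with v ∈ Z ∧ #Z / 2 = m, squareWeight q Z ≤
      (162 / (ε ^ 2 * q)) ^ m := by
  have hfiber : {Z ∈ denseEvenSets n ε | v ∈ Z ∧ #Z / 2 = m} ⊆
      {Z ∈ denseEvenSets n ε | v ∈ Z ∧ #Z = 2 * m} := fun Z hZ => by
    obtain ⟨hZ, hvZ, hZm⟩ := mem_filter.mp hZ
    obtain ⟨k, hk⟩ := (mem_filter.mp hZ).2.2.1
    exact mem_filter.mpr ⟨hZ, hvZ, by omega⟩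
  rw [sum_congr rfl fun Z hZ => by rw [squareWeight, (mem_filter.mp hZ).2.2], sum_const,
    nsmul_eq_mul]
  calc (#{Z ∈ denseEvenSets n ε | v ∈ Z ∧ #Z / 2 = m} : ℝ) * (2 / q : ℝ) ^ m
      ≤ (9 / ε) ^ (2 * m) * (2 / q : ℝ) ^ m := by
        gcongr
        exact (Nat.cast_le.mpr ((card_le_card hfiber).trans
          (card_denseEvenSets_mem_card_eq_le hε0 v m))).trans
          (cast_choose_two_mul_ceil_le hε0 hε1 hm)
    _ = (162 / (ε ^ 2 * q)) ^ m := by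
        rw [pow_mul, ← mul_pow]
        congr 1
        field_simp
        norm_num

theorem sum_squareWeight_le (hε0 : 0 < ε) (hε1 : ε < 1) (hq : 810 / ε ^ 2 ≤ q) (v : Fin n) :
    ∑ Z ∈ denseEvenSets n ε with v ∈ Z, squareWeight q Z ≤ 1 / 4 := by
  have hq0 : (0 : ℝ) < q := by linarith [le_of_div_sq_le (by norm_num) hε0 hε1 hq]
  set ρ : ℝ := 162 / (ε ^ 2 * q)
  have hρ0 : 0 ≤ ρ := by positivity
  have hρ : ρ ≤ 1 / 5 := by
    rw [div_le_iff₀ (by positivity)]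
    rw [div_le_iff₀ (by positivity)] at hq
    linarith
  have hmaps : ∀ Z ∈ ({Z ∈ denseEvenSets n ε | v ∈ Z} : Finset _), #Z / 2 ∈ Ico 1 (n + 1) := by
    intro Z hZ
    have := two_le_card_of_mem_denseEvenSets (mem_filter.mp hZ).1
    have := card_le_univ Z
    simp only [Fintype.card_fin] at this
    exact mem_Ico.mpr ⟨by omega, by omega⟩
  rw [← sum_fiberwise_of_maps_to hmaps]
  calc ∑ m ∈ Ico 1 (n + 1), ∑ Z ∈ {Z ∈ denseEvenSets n ε | v ∈ Z} with #Z / 2 = m,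
        squareWeight q Z
      ≤ ∑ m ∈ Ico 1 (n + 1), ρ ^ m := sum_le_sum fun m hm => by
        rw [filter_filter]
        exact sum_squareWeight_le_of_card_div_two_eq hε0 hε1 hq0 v (mem_Ico.mp hm).1
    _ ≤ ρ ^ 1 / (1 - ρ) := geom_sum_Ico_le_of_lt_one hρ0 (by linarith)
    _ ≤ 1 / 4 := by rw [div_le_iff₀ (by linarith)]; linarith

theorem half_pow_le_prod_one_sub_squareWeight (hε0 : 0 < ε) (hε1 : ε < 1)
    (hq : 810 / ε ^ 2 ≤ q) {Z : Finset (Fin n)} {m : ℕ} (hm : #Z = m + m) :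
    (1 / 2 : ℝ) ^ m ≤
      ∏ Z' ∈ denseEvenSets n ε with Z' ≠ Z ∧ ¬Disjoint Z Z', (1 - squareWeight q Z') := by
  have hw1 := squareWeight_le_one (n := n) (by linarith [le_of_div_sq_le (by norm_num) hε0 hε1 hq])
  have hw0 := squareWeight_nonneg (n := n) (q := q)
  have hnbrs : {Z' ∈ denseEvenSets n ε | Z' ≠ Z ∧ ¬Disjoint Z Z'} ⊆
      Z.biUnion fun v => {Z' ∈ denseEvenSets n ε | v ∈ Z'} := by
    intro Z' hZ'
    obtain ⟨hZ', -, hdisj⟩ := mem_filter.mp hZ'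
    obtain ⟨v, hvZ, hvZ'⟩ := not_disjoint_iff.mp hdisj
    exact mem_biUnion.mpr ⟨v, hvZ, mem_filter.mpr ⟨hZ', hvZ'⟩⟩
  calc (1 / 2 : ℝ) ^ m ≤ (3 / 4) ^ (m + m) := by
        rw [pow_add, ← mul_pow]; gcongr; norm_num
    _ = ∏ v ∈ Z, (1 - 1 / 4 : ℝ) := by rw [prod_const, hm]; norm_num
    _ ≤ ∏ v ∈ Z, (1 - ∑ Z' ∈ denseEvenSets n ε with v ∈ Z', squareWeight q Z') := by
        gcongr with v
        exact sum_squareWeight_le hε0 hε1 hq v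
    _ ≤ ∏ v ∈ Z, ∏ Z' ∈ denseEvenSets n ε with v ∈ Z', (1 - squareWeight q Z') :=
        prod_le_prod (fun v _ => by linarith [sum_squareWeight_le hε0 hε1 hq v])
          fun v _ => one_sub_sum_le_prod_one_sub _ (fun Z' _ => hw0 Z') fun Z' _ => hw1 Z'
    _ ≤ ∏ Z' ∈ Z.biUnion fun v => {Z' ∈ denseEvenSets n ε | v ∈ Z'}, (1 - squareWeight q Z') :=
        prod_prod_le_prod_biUnion _ _ (fun Z' => by linarith [hw1 Z']) fun Z' => by
          linarith [hw0 Z']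
    _ ≤ _ := prod_le_prod_of_subset_of_le_one hnbrs (fun Z' _ => by linarith [hw1 Z'])
        fun Z' _ _ => by linarith [hw0 Z']

open scoped Classical in
theorem localLemmaBound_isSquareOn (hε0 : 0 < ε) (hε1 : ε < 1) (hq : 810 / ε ^ 2 ≤ q) :
    LocalLemmaBound (denseEvenSets n ε) (fun Z => {f : Fin n → Fin q | IsSquareOn f Z}) id
      (squareWeight q) := by
  intro Z hZ
  have hq0 : (0 : ℝ) < q := by linarith [le_of_div_sq_le (by norm_num) hε0 hε1 hq]
  obtain ⟨k, hk⟩ := (mem_filter.mp hZ).2.2.1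
  have hm : #Z / 2 = k := by omega
  have hkn : k ≤ n := by have := card_le_univ Z; simp only [Fintype.card_fin] at this; omega
  calc (#{f : Fin n → Fin q | IsSquareOn f Z} : ℝ) ≤ (q : ℝ) ^ (n - k) := by
        exact_mod_cast (card_filter_isSquareOn_le hk).trans_eq (by simp)
    _ = squareWeight q Z * (1 / 2) ^ k * q ^ n := by
        rw [squareWeight, hm, pow_sub₀ _ hq0.ne' hkn, ← mul_pow,
          show (2 / q : ℝ) * (1 / 2) = (q : ℝ)⁻¹ by field_simp, inv_pow]
        ring
    _ ≤ _ := by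
        rw [Fintype.card_fun, Fintype.card_fin, Fintype.card_fin, Nat.cast_pow]
        gcongr
        · exact squareWeight_nonneg Z
        · exact half_pow_le_prod_one_sub_squareWeight hε0 hε1 hq hk

end SyncStrings

/-- There exists an absolute constant `C > 0` such that for every
`ε ∈ (0,1)` and every `n ∈ ℕ` there exists an ε-synchronization string of
length `n` over an alphabet of size at most `C·ε⁻²`. -/
theorem exists_sync_string_alphabet_eps_sq :
    ∃ C : ℝ, 0 < C ∧ ∀ ε : ℝ, 0 < ε → ε < 1 → ∀ n : ℕ,
      ∃ (q : ℕ) (S : List (Fin q)),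
        (q : ℝ) ≤ C / ε ^ 2 ∧ S.length = n ∧ IsSyncString ε S := by
  classical
  refine ⟨811, by norm_num, fun ε hε0 hε1 n => ?_⟩
  set q := ⌈810 / ε ^ 2⌉₊
  have hq : 810 / ε ^ 2 ≤ q := Nat.le_ceil _
  have hq810 := le_of_div_sq_le (by norm_num) hε0 hε1 hq
  have : Nonempty (Fin q) := ⟨⟨0, by exact_mod_cast (show (0 : ℝ) < q by linarith)⟩⟩
  obtain ⟨f, hf⟩ := exists_forall_notMem_of_localLemmaBound
    (fun Z _ => squareWeight_nonneg Z)
    (fun Z hZ => squareWeight_lt_one (by linarith) (two_le_card_of_mem_denseEvenSets hZ))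
    (fun Z => by simpa using dependsOn_isSquareOn Z) (localLemmaBound_isSquareOn hε0 hε1 hq)
  refine ⟨q, List.ofFn f, (natCeil_div_sq_le (by norm_num) hε0 hε1).trans_eq (by norm_num),
    List.length_ofFn, by_contra fun h => ?_⟩
  obtain ⟨Z, hZ, hsq⟩ := exists_isSquareOn_of_not_isSyncString hε0 h
  exact hf Z hZ (by simpa using hsq)
end

section
/- Let T₁ = S₁ ∘ S₂ ∘ … ∘ S_{ℓ₁} be the concatenation of ℓ₁ strings and T₂ = S'₁ ∘ S'₂ ∘ … ∘ S'_{ℓ₂} the concatenation of ℓ₂ strings over a common alphabet. If there is an integer t such that LCS(S_i, S'_j) ≤ t for all 1 ≤ i ≤ ℓ₁ and 1 ≤ j ≤ ℓ₂, then LCS(T₁, T₂) ≤ (ℓ₁ + ℓ₂)·t. -/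
section LCS

variable {α : Type*}

theorem lcsLen_le_of_forall {S T : List α} {n : ℕ}
    (h : ∀ U : List α, U.Sublist S → U.Sublist T → U.length ≤ n) : lcsLen S T ≤ n :=
  csSup_le ⟨0, [], rfl, List.nil_sublist _, List.nil_sublist _⟩ fun _ ⟨U, hU, hS, hT⟩ =>
    hU ▸ h U hS hT

theorem length_le_lcsLen {U S T : List α} (hS : U.Sublist S) (hT : U.Sublist T) :
    U.length ≤ lcsLen S T :=
  le_csSup ⟨S.length, fun _ ⟨_, hV, hVS, _⟩ => hV ▸ hVS.length_le⟩ ⟨U, rfl, hS, hT⟩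

@[simp]
theorem lcsLen_nil_left (T : List α) : lcsLen [] T = 0 :=
  Nat.eq_zero_of_le_zero <| lcsLen_le_of_forall fun U hU _ => by
    rw [List.sublist_nil.mp hU, List.length_nil]

@[simp]
theorem lcsLen_nil_right (S : List α) : lcsLen S [] = 0 :=
  Nat.eq_zero_of_le_zero <| lcsLen_le_of_forall fun U _ hU => by
    rw [List.sublist_nil.mp hU, List.length_nil]

theorem lcsLen_append_le (A X B Y : List α) :
    lcsLen (A ++ X) (B ++ Y) ≤ lcsLen A B + max (lcsLen X (B ++ Y)) (lcsLen (A ++ X) Y) := by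
  refine lcsLen_le_of_forall fun U hU₁ hU₂ => ?_
  obtain ⟨V, W, rfl, hVA, hWX⟩ := List.sublist_append_iff.mp hU₁
  obtain ⟨V', W', hVW, hV'B, hW'Y⟩ := List.sublist_append_iff.mp hU₂
  rcases List.append_eq_append_iff.mp hVW with ⟨Z, hV', -⟩ | ⟨Z, hV, -⟩
  · have hV : V.length ≤ lcsLen A B :=
      length_le_lcsLen hVA ((hV' ▸ List.sublist_append_left V Z).trans hV'B)
    have hW : W.length ≤ lcsLen X (B ++ Y) :=
      length_le_lcsLen hWX ((List.sublist_append_right V W).trans hU₂)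
    simp only [List.length_append]
    omega
  · have hV' : V'.length ≤ lcsLen A B :=
      length_le_lcsLen ((hV ▸ List.sublist_append_left V' Z).trans hVA) hV'B
    have hW' : W'.length ≤ lcsLen (A ++ X) Y :=
      length_le_lcsLen ((hVW ▸ List.sublist_append_right V' W').trans hU₁) hW'Y
    rw [hVW, List.length_append]
    omega

theorem lcsLen_flatten_le {t : ℕ} (L₁ L₂ : List (List α))
    (h : ∀ A ∈ L₁, ∀ B ∈ L₂, lcsLen A B ≤ t) :
    lcsLen L₁.flatten L₂.flatten ≤ (L₁.length + L₂.length) * t := by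
  induction L₁ generalizing L₂ with
  | nil => simp
  | cons A L₁ ihL₁ =>
    induction L₂ with
    | nil => simp
    | cons B L₂ ihL₂ =>
      have hAB : lcsLen A B ≤ t := h A (by simp) B (by simp)
      have hL₁ := ihL₁ (B :: L₂) fun A' hA' B' hB' => h A' (by simp [hA']) B' hB'
      have hL₂ := ihL₂ fun A' hA' B' hB' => h A' hA' B' (by simp [hB'])
      simp only [List.flatten_cons, List.length_cons] at hL₁ hL₂ ⊢
      calc lcsLen (A ++ L₁.flatten) (B ++ L₂.flatten)
          ≤ lcsLen A B + max (lcsLen L₁.flatten (B ++ L₂.flatten))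
              (lcsLen (A ++ L₁.flatten) L₂.flatten) := lcsLen_append_le _ _ _ _
        _ ≤ t + (L₁.length + L₂.length + 1) * t := by
          gcongr
          exact max_le (hL₁.trans_eq (by ring)) (hL₂.trans_eq (by ring))
        _ = (L₁.length + 1 + (L₂.length + 1)) * t := by ring

end LCS

/-- If `T₁` is a concatenation of `ℓ₁` strings, `T₂` is a
concatenation of `ℓ₂` strings, and each pair of pieces has LCS at most `t`,
then `LCS(T₁, T₂) ≤ (ℓ₁ + ℓ₂)·t`. -/
theorem lcs_concat_le {α : Type*} (ℓ₁ ℓ₂ t : ℕ)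
    (S : Fin ℓ₁ → List α) (S' : Fin ℓ₂ → List α)
    (h : ∀ (i : Fin ℓ₁) (j : Fin ℓ₂), lcsLen (S i) (S' j) ≤ t) :
    lcsLen (List.ofFn S).flatten (List.ofFn S').flatten ≤ (ℓ₁ + ℓ₂) * t := by
  simpa using lcsLen_flatten_le (List.ofFn S) (List.ofFn S') <| by
    simp only [List.mem_ofFn, forall_exists_index]
    rintro _ i rfl _ j rfl
    exact h i j
end

section
/- For every n ∈ ℕ and every ε ∈ (0,1], setting q = ⌈2e/ε⌉, there exists a code C ⊆ Σⁿ over an alphabet Σ of size q with |C| ≥ 2^{εn} codewords such that any two distinct codewords of C differ in at least (1−ε)·n coordinates. -/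
open Finset in
lemma agree_count {q n : ℕ} (m : ℕ) (c : Fin n → Fin q) :
    (Finset.univ.filter fun x : Fin n → Fin q =>
      m ≤ (Finset.univ.filter fun i => x i = c i).card).card ≤ n.choose m * q ^ (n - m) := by
  classical
  have hsub : (Finset.univ.filter fun x : Fin n → Fin q =>
      m ≤ (Finset.univ.filter fun i => x i = c i).card) ⊆
      (Finset.univ.powersetCard m).biUnion
        (fun A => Fintype.piFinset fun i => if i ∈ A then ({c i} : Finset (Fin q)) else univ) := by
    intro x hx
    rw [mem_filter] at hx
    obtain ⟨A, hA, hAcard⟩ := Finset.exists_subset_card_eq hx.2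
    refine mem_biUnion.2 ⟨A, ?_, ?_⟩
    · exact Finset.mem_powersetCard.2 ⟨subset_univ _, hAcard⟩
    · rw [Fintype.mem_piFinset]
      intro i
      by_cases hi : i ∈ A
      · simp only [hi, if_true, mem_singleton]
        exact (mem_filter.1 (hA hi)).2
      · simp [hi]
  refine (card_le_card hsub).trans ((card_biUnion_le).trans ?_)
  have hcard : ∀ A ∈ Finset.univ.powersetCard m,
      (Fintype.piFinset fun i => if i ∈ A then ({c i} : Finset (Fin q)) else univ).card
        = q ^ (n - m) := by
    intro A hA
    have hAcard : A.card = m := (Finset.mem_powersetCard.1 hA).2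
    rw [Fintype.card_piFinset]
    have : ∀ i, (if i ∈ A then ({c i} : Finset (Fin q)) else univ).card
        = if i ∈ A then 1 else q := by
      intro i; by_cases hi : i ∈ A <;> simp [hi]
    rw [Finset.prod_congr rfl fun i _ => this i, Finset.prod_ite]
    simp only [Finset.prod_const_one, Finset.prod_const, one_mul]
    congr 1
    have : Finset.univ.filter (fun i => ¬ i ∈ A) = Aᶜ := by
      ext i; simp
    rw [this, Finset.card_compl, Fintype.card_fin, hAcard]
  rw [Finset.sum_congr rfl hcard, Finset.sum_const, smul_eq_mul]
  apply Nat.mul_le_mul_right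
  rw [Finset.card_powersetCard]
  simp



/-- For every `n` and `ε ∈ (0,1]`, with `q = ⌈2e/ε⌉`, there is a
code of block length `n` over an alphabet of size `q` with at least `2^{εn}`
codewords whose distinct codewords differ in at least `(1−ε)·n` coordinates. -/
theorem exists_greedy_code (n : ℕ) (ε : ℝ) (hε : 0 < ε) (hε1 : ε ≤ 1) :
    ∃ C : Finset (Fin n → Fin ⌈2 * Real.exp 1 / ε⌉₊),
      (2 : ℝ) ^ (ε * (n : ℝ)) ≤ (C.card : ℝ) ∧
      ∀ c₁ ∈ C, ∀ c₂ ∈ C, c₁ ≠ c₂ → (1 - ε) * (n : ℝ) ≤ (hammingDist c₁ c₂ : ℝ) := by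
  classical
  set q := ⌈2 * Real.exp 1 / ε⌉₊ with hqdef
  have hepos : (0:ℝ) < Real.exp 1 := Real.exp_pos 1
  have hqratio : (2:ℝ) * Real.exp 1 / ε ≤ (q : ℝ) := Nat.le_ceil _
  have hq2 : (2:ℝ) ≤ (q:ℝ) := by
    refine le_trans ?_ hqratio
    rw [le_div_iff₀ hε]
    nlinarith [Real.one_le_exp (zero_le_one : (0:ℝ) ≤ 1)]
  have hqpos : (0:ℝ) < (q:ℝ) := lt_of_lt_of_le two_pos hq2
  set d := ⌈(1 - ε) * (n:ℝ)⌉₊ with hddef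
  have hdist_of_d : ∀ x y : Fin n → Fin q, d ≤ hammingDist x y →
      (1 - ε) * (n:ℝ) ≤ (hammingDist x y : ℝ) := by
    intro x y h
    calc (1 - ε) * (n:ℝ) ≤ (d : ℝ) := Nat.le_ceil _
    _ ≤ _ := by exact_mod_cast h
  -- maximal code
  set good : Finset (Fin n → Fin q) → Prop :=
    fun C => ∀ c₁ ∈ C, ∀ c₂ ∈ C, c₁ ≠ c₂ → d ≤ hammingDist c₁ c₂ with hgood
  have hgoodempty : good ∅ := by intro c₁ h; simp at h
  obtain ⟨C, hCmem, hCmax⟩ := Finset.exists_max_image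
    (Finset.univ.filter good) Finset.card ⟨∅, Finset.mem_filter.2 ⟨Finset.mem_univ _, hgoodempty⟩⟩
  have hCgood : good C := (Finset.mem_filter.1 hCmem).2
  have hCmax' : ∀ D, good D → D.card ≤ C.card := by
    intro D hD; exact hCmax D (Finset.mem_filter.2 ⟨Finset.mem_univ _, hD⟩)
  refine ⟨C, ?_, fun c₁ h₁ c₂ h₂ hne => hdist_of_d _ _ (hCgood c₁ h₁ c₂ h₂ hne)⟩
  -- size bound
  by_cases hd0 : d = 0
  · -- univ is good
    have : (Finset.univ : Finset (Fin n → Fin q)).card ≤ C.card := by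
      apply hCmax'; intro c₁ _ c₂ _ _; simp [hd0]
    rw [Finset.card_univ, Fintype.card_fun, Fintype.card_fin, Fintype.card_fin] at this
    calc (2:ℝ) ^ (ε * (n:ℝ)) ≤ (2:ℝ) ^ ((n:ℝ)) := by
          apply Real.rpow_le_rpow_of_exponent_le one_le_two
          nlinarith [Nat.cast_nonneg (α := ℝ) n]
      _ = (2:ℝ) ^ (n:ℕ) := by rw [Real.rpow_natCast]
      _ ≤ (q:ℝ) ^ (n:ℕ) := by apply pow_le_pow_left₀ (by norm_num) hq2
      _ ≤ (C.card : ℝ) := by exact_mod_cast this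
  · -- main case
    have hd1 : 1 ≤ d := Nat.one_le_iff_ne_zero.2 hd0
    have hdn : d ≤ n := by
      rw [hddef]
      apply Nat.ceil_le.2
      nlinarith [Nat.cast_nonneg (α := ℝ) n]
    set m := n + 1 - d with hmdef
    have hm1 : 1 ≤ m := by omega
    have hmn : m ≤ n := by omega
    have hmcast : (m:ℝ) = (n:ℝ) + 1 - (d:ℝ) := by
      rw [hmdef]; push_cast [Nat.cast_sub (by omega : d ≤ n + 1)]; ring
    have hεm : ε * (n:ℝ) ≤ (m:ℝ) := by
      have hdlt : (d:ℝ) < (1 - ε) * (n:ℝ) + 1 := by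
        apply Nat.ceil_lt_add_one
        nlinarith [Nat.cast_nonneg (α := ℝ) n]
      rw [hmcast]; nlinarith
    have hmpos : (0:ℝ) < (m:ℝ) := by exact_mod_cast hm1
    -- covering
    have hcover : (Finset.univ : Finset (Fin n → Fin q)) ⊆
        C.biUnion (fun c => Finset.univ.filter fun x => hammingDist x c < d) := by
      intro x _
      by_contra hx
      simp only [Finset.mem_biUnion, Finset.mem_filter, Finset.mem_univ, true_and,
        not_exists, not_and, not_lt] at hx
      have hxC : x ∉ C := fun h => by
        have := hx x h; simp [hammingDist_self] at this; omega
      have : good (insert x C) := by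
        intro c₁ h₁ c₂ h₂ hne
        rcases Finset.mem_insert.1 h₁ with h₁x | h₁C
        · rcases Finset.mem_insert.1 h₂ with h₂x | h₂C
          · exact absurd (h₁x.trans h₂x.symm) hne
          · subst h₁x; exact hx c₂ h₂C
        · rcases Finset.mem_insert.1 h₂ with h₂x | h₂C
          · subst h₂x; rw [hammingDist_comm]; exact hx c₁ h₁C
          · exact hCgood c₁ h₁C c₂ h₂C hne
      have := hCmax' _ this
      rw [Finset.card_insert_of_notMem hxC] at this
      omega
    -- each ball is small
    have hball : ∀ c : Fin n → Fin q,
        (Finset.univ.filter fun x => hammingDist x c < d).card ≤ n.choose m * q ^ (n - m) := by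
      intro c
      refine le_trans (Finset.card_le_card ?_) (agree_count m c)
      intro x hx
      rw [Finset.mem_filter] at hx ⊢
      refine ⟨hx.1, ?_⟩
      have hxd : hammingDist x c < d := hx.2
      have hsplit : (Finset.univ.filter fun i => x i = c i).card
          + (Finset.univ.filter fun i => ¬ x i = c i).card = n := by
        rw [Finset.card_filter_add_card_filter_not]
        simp
      have : hammingDist x c = (Finset.univ.filter fun i => ¬ x i = c i).card := rfl
      omega
    -- counting
    have hcount : q ^ n ≤ C.card * (n.choose m * q ^ (n - m)) := by
      calc q ^ n = (Finset.univ : Finset (Fin n → Fin q)).card := by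
            rw [Finset.card_univ, Fintype.card_fun, Fintype.card_fin, Fintype.card_fin]
        _ ≤ (C.biUnion fun c => Finset.univ.filter fun x => hammingDist x c < d).card :=
            Finset.card_le_card hcover
        _ ≤ ∑ c ∈ C, (Finset.univ.filter fun x => hammingDist x c < d).card :=
            Finset.card_biUnion_le
        _ ≤ ∑ _c ∈ C, n.choose m * q ^ (n - m) := Finset.sum_le_sum fun c _ => hball c
        _ = C.card * (n.choose m * q ^ (n - m)) := by rw [Finset.sum_const, smul_eq_mul]
    -- real arithmetic
    have hfact : ((m:ℝ) / Real.exp 1) ^ m ≤ (Nat.factorial m : ℝ) := by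
      have h := Real.pow_div_factorial_le_exp (x := (m:ℝ)) (by positivity) m
      rw [div_le_iff₀ (by positivity)] at h
      rw [div_pow, div_le_iff₀ (by positivity)]
      calc (m:ℝ) ^ m ≤ Real.exp (m:ℝ) * (Nat.factorial m : ℝ) := h
        _ = (Nat.factorial m : ℝ) * Real.exp 1 ^ m := by
            rw [← Real.exp_one_rpow (m:ℝ), Real.rpow_natCast]; ring
    have hchoose : (n.choose m : ℝ) * (Nat.factorial m : ℝ) ≤ (n:ℝ) ^ m := by
      have : n.choose m * Nat.factorial m ≤ n ^ m := by
        have h1 : Nat.factorial m * n.choose m = n.descFactorial m :=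
          (Nat.descFactorial_eq_factorial_mul_choose n m).symm
        calc n.choose m * Nat.factorial m = n.descFactorial m := by rw [mul_comm, h1]
          _ ≤ n ^ m := Nat.descFactorial_le_pow n m
      exact_mod_cast this
    have hkey : (2:ℝ) ^ (ε * (n:ℝ)) * (n.choose m : ℝ) ≤ (q:ℝ) ^ m := by
      have h2m : (2:ℝ) ^ (ε * (n:ℝ)) ≤ (2:ℝ) ^ m := by
        calc (2:ℝ) ^ (ε * (n:ℝ)) ≤ (2:ℝ) ^ ((m:ℝ)) :=
              Real.rpow_le_rpow_of_exponent_le one_le_two hεm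
          _ = (2:ℝ) ^ (m:ℕ) := Real.rpow_natCast 2 m
      have hchoose2 : (n.choose m : ℝ) ≤ ((n:ℝ) * Real.exp 1 / (m:ℝ)) ^ m := by
        have hfm : (0:ℝ) < (Nat.factorial m : ℝ) := by exact_mod_cast Nat.factorial_pos m
        rw [div_pow]
        rw [le_div_iff₀ (by positivity)]
        calc (n.choose m : ℝ) * (m:ℝ) ^ m
            = (n.choose m : ℝ) * ((m:ℝ)/Real.exp 1) ^ m * Real.exp 1 ^ m := by
              rw [div_pow]; field_simp
          _ ≤ (n.choose m : ℝ) * (Nat.factorial m : ℝ) * Real.exp 1 ^ m := by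
              apply mul_le_mul_of_nonneg_right _ (by positivity)
              exact mul_le_mul_of_nonneg_left hfact (by positivity)
          _ ≤ (n:ℝ) ^ m * Real.exp 1 ^ m := mul_le_mul_of_nonneg_right hchoose (by positivity)
          _ = ((n:ℝ) * Real.exp 1) ^ m := (mul_pow _ _ _).symm
      have hne : (n:ℝ) * Real.exp 1 / (m:ℝ) ≤ Real.exp 1 / ε := by
        rw [div_le_div_iff₀ hmpos hε]
        nlinarith
      calc (2:ℝ) ^ (ε * (n:ℝ)) * (n.choose m : ℝ)
          ≤ (2:ℝ) ^ (m:ℕ) * ((n:ℝ) * Real.exp 1 / (m:ℝ)) ^ m := by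
            apply mul_le_mul h2m hchoose2 (Nat.cast_nonneg _) (by positivity)
        _ = ((2:ℝ) * ((n:ℝ) * Real.exp 1 / (m:ℝ))) ^ m := (mul_pow _ _ _).symm
        _ ≤ ((q:ℝ)) ^ m := by
            apply pow_le_pow_left₀ (by positivity)
            calc (2:ℝ) * ((n:ℝ) * Real.exp 1 / (m:ℝ)) ≤ 2 * (Real.exp 1 / ε) := by
                  apply mul_le_mul_of_nonneg_left hne (by norm_num)
              _ = 2 * Real.exp 1 / ε := by ring
              _ ≤ (q:ℝ) := hqratio
    -- combine
    have hK : (0:ℝ) < (n.choose m : ℝ) * (q:ℝ) ^ (n - m) := by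
      have : 0 < n.choose m := Nat.choose_pos hmn
      positivity
    have hcountR : (q:ℝ) ^ n ≤ (C.card : ℝ) * ((n.choose m : ℝ) * (q:ℝ) ^ (n - m)) := by
      exact_mod_cast hcount
    have hqn : (q:ℝ) ^ m * (q:ℝ) ^ (n - m) = (q:ℝ) ^ n := by
      rw [← pow_add]; congr 1; omega
    have hfinal : (2:ℝ) ^ (ε * (n:ℝ)) * ((n.choose m : ℝ) * (q:ℝ) ^ (n - m))
        ≤ (C.card : ℝ) * ((n.choose m : ℝ) * (q:ℝ) ^ (n - m)) := by
      calc (2:ℝ) ^ (ε * (n:ℝ)) * ((n.choose m : ℝ) * (q:ℝ) ^ (n - m))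
          = ((2:ℝ) ^ (ε * (n:ℝ)) * (n.choose m : ℝ)) * (q:ℝ) ^ (n - m) := by ring
        _ ≤ (q:ℝ) ^ m * (q:ℝ) ^ (n - m) := by
            apply mul_le_mul_of_nonneg_right hkey (by positivity)
        _ = (q:ℝ) ^ n := hqn
        _ ≤ _ := hcountR
    exact le_of_mul_le_mul_right hfinal hK
end
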